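/- Let M, d ∈ ℕ with d ≥ 1, and ξ, β ∈ (0,1). If M ≥ (2/ξ)(ln(1/β) + d), then ∑_{j=0}^{d-1} C(M, j) ξʲ (1-ξ)^{M-j} ≤ β, where C(M,j) denotes the binomial coefficient. -/
import Mathlib


theorem stmt_11 (M d : ℕ) (hd : 1 ≤ d) (ξ β : ℝ)
    (hξ : ξ ∈ Set.Ioo (0:ℝ) 1) (hβ : β ∈ Set.Ioo (0:ℝ) 1)
    (hM : (M : ℝ) ≥ (2 / ξ) * (Real.log (1 / β) + d)) :
    ∑ j ∈ Finset.range d, (M.choose j : ℝ) * ξ ^ j * (1 - ξ) ^ (M - j) ≤ β := by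
  obtain ⟨hξ0, hξ1⟩ := hξ
  obtain ⟨hβ0, hβ1⟩ := hβ
  set g : ℕ → ℝ := fun j => (M.choose j : ℝ) * (ξ / 2) ^ j * (1 - ξ) ^ (M - j) with hg
  have h1ξ : (0:ℝ) ≤ 1 - ξ := by linarith
  have hgnn : ∀ j, 0 ≤ g j := by
    intro j
    apply mul_nonneg (mul_nonneg (by positivity) (by positivity)) (by positivity)
  -- Step 1: termwise bound
  have step1 : ∑ j ∈ Finset.range d, (M.choose j : ℝ) * ξ ^ j * (1 - ξ) ^ (M - j)
      ≤ (2:ℝ) ^ (d - 1) * ∑ j ∈ Finset.range d, g j := by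
    rw [Finset.mul_sum]
    apply Finset.sum_le_sum
    intro j hj
    have hjd : j ≤ d - 1 := Nat.le_sub_one_of_lt (Finset.mem_range.mp hj)
    have hξj : ξ ^ j = 2 ^ j * (ξ / 2) ^ j := by
      rw [← mul_pow]; ring_nf
    have h2j : (2:ℝ) ^ j ≤ 2 ^ (d - 1) := by
      apply pow_le_pow_right₀ (by norm_num) hjd
    calc (M.choose j : ℝ) * ξ ^ j * (1 - ξ) ^ (M - j)
        = 2 ^ j * ((M.choose j : ℝ) * (ξ / 2) ^ j * (1 - ξ) ^ (M - j)) := by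
          rw [hξj]; ring
      _ ≤ 2 ^ (d - 1) * g j := by
          apply mul_le_mul_of_nonneg_right h2j (hgnn j)
  -- Step 2: extend sum to range (M+1); use that g j = 0 for j > M
  have step2 : ∑ j ∈ Finset.range d, g j ≤ ∑ j ∈ Finset.range (M + 1), g j := by
    have hsub : ∑ j ∈ Finset.range d, g j ≤ ∑ j ∈ Finset.range (max d (M + 1)), g j :=
      Finset.sum_le_sum_of_subset_of_nonneg
        (Finset.range_subset_range.mpr (le_max_left _ _)) (fun j _ _ => hgnn j)
    have heq : ∑ j ∈ Finset.range (max d (M + 1)), g j = ∑ j ∈ Finset.range (M + 1), g j := by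
      apply (Finset.sum_subset (Finset.range_subset_range.mpr (le_max_right _ _)) _).symm
      intro j hj hj'
      have : M < j := by
        by_contra h
        exact hj' (Finset.mem_range.mpr (Nat.lt_succ_of_le (le_of_not_gt h)))
      simp [hg, Nat.choose_eq_zero_of_lt this]
    linarith
  -- Step 3: binomial theorem
  have step3 : ∑ j ∈ Finset.range (M + 1), g j = (1 - ξ / 2) ^ M := by
    have := add_pow (ξ / 2) (1 - ξ) M
    have h : ξ / 2 + (1 - ξ) = 1 - ξ / 2 := by ring
    rw [h] at this
    rw [this]
    apply Finset.sum_congr rfl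
    intro j _
    simp [hg]; ring
  -- Step 4: (1 - ξ/2)^M ≤ exp(-(ξ/2) * M)
  have step4 : (1 - ξ / 2) ^ M ≤ Real.exp (-(ξ / 2) * M) := by
    have h1 : 1 - ξ / 2 ≤ Real.exp (-(ξ / 2)) := by
      have := Real.add_one_le_exp (-(ξ / 2))
      linarith
    have h0 : (0:ℝ) ≤ 1 - ξ / 2 := by linarith
    calc (1 - ξ / 2) ^ M ≤ (Real.exp (-(ξ / 2))) ^ M := pow_le_pow_left₀ h0 h1 M
      _ = Real.exp (-(ξ / 2) * M) := by
          rw [← Real.exp_nat_mul]; ring_nf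
  -- Step 5: 2^(d-1) ≤ exp(d-1)
  have step5 : (2:ℝ) ^ (d - 1) ≤ Real.exp ((d:ℝ) - 1) := by
    have h2e : (2:ℝ) ≤ Real.exp 1 := by
      have := Real.add_one_le_exp (1:ℝ); linarith
    calc (2:ℝ) ^ (d - 1) ≤ (Real.exp 1) ^ (d - 1) :=
        pow_le_pow_left₀ (by norm_num) h2e _
      _ = Real.exp ((d - 1 : ℕ)) := by rw [← Real.exp_nat_mul]; ring_nf
      _ = Real.exp ((d:ℝ) - 1) := by
          congr 1
          rw [Nat.cast_sub hd]; norm_num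
  -- Final arithmetic
  have hξne : ξ ≠ 0 := ne_of_gt hξ0
  have hhalf : (0:ℝ) < ξ / 2 := by positivity
  have hkey : Real.log (1 / β) + d ≤ ξ / 2 * M := by
    have h := mul_le_mul_of_nonneg_left hM (le_of_lt hhalf)
    have heq : ξ / 2 * ((2 / ξ) * (Real.log (1 / β) + d)) = Real.log (1 / β) + d := by
      field_simp
    linarith [heq ▸ h]
  have hlog : Real.log (1 / β) = -Real.log β := by
    rw [one_div, Real.log_inv]
  have hexp : ((d:ℝ) - 1) + (-(ξ / 2) * M) ≤ Real.log β := by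
    rw [hlog] at hkey
    linarith
  calc ∑ j ∈ Finset.range d, (M.choose j : ℝ) * ξ ^ j * (1 - ξ) ^ (M - j)
      ≤ (2:ℝ) ^ (d - 1) * ∑ j ∈ Finset.range d, g j := step1
    _ ≤ (2:ℝ) ^ (d - 1) * ((1 - ξ / 2) ^ M) := by
        rw [← step3]
        exact mul_le_mul_of_nonneg_left step2 (by positivity)
    _ ≤ Real.exp ((d:ℝ) - 1) * Real.exp (-(ξ / 2) * M) := by
        apply mul_le_mul step5 step4 (pow_nonneg (by linarith) M) (le_of_lt (Real.exp_pos _))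
    _ = Real.exp (((d:ℝ) - 1) + (-(ξ / 2) * M)) := (Real.exp_add _ _).symm
    _ ≤ Real.exp (Real.log β) := Real.exp_le_exp.mpr hexp
    _ = β := Real.exp_log hβ0
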